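/- The odds function x ↦ Φ(x)/(1 − Φ(x)) is convex on ℝ. -/

import Mathlib

open MeasureTheory ProbabilityTheory

/-- Standard normal density. -/
noncomputable def phi (x : ℝ) : ℝ := (Real.sqrt (2 * Real.pi))⁻¹ * Real.exp (-x ^ 2 / 2)

/-- Standard normal CDF. -/
noncomputable def Phi (x : ℝ) : ℝ := ∫ s in Set.Iic x, phi s

/-- Standard normal hazard function (inverse Mills ratio). -/
noncomputable def lam (x : ℝ) : ℝ := phi x / (1 - Phi x)

/-- Mills-ratio-type function `φ(x)/Φ(x)`. -/
noncomputable def mills (x : ℝ) : ℝ := phi x / Phi x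

/-!
Write `T = 1 - Φ` for the Gaussian tail. Since `φ' = -x φ`, the odds `Φ / T` have
derivative `φ / T²` and second derivative `φ (2φ - x T) / T³`. This is nonnegative by the
Mills-ratio bound `x T(x) = ∫_x^∞ x φ ≤ ∫_x^∞ s φ(s) ds = φ(x)`, valid for every real `x`.
-/

open Set Filter Topology

lemma phi_eq_gaussianPDFReal : phi = gaussianPDFReal 0 1 := by
  ext x
  simp [phi, gaussianPDFReal]

lemma phi_pos (x : ℝ) : 0 < phi x := by
  rw [phi_eq_gaussianPDFReal]
  exact gaussianPDFReal_pos _ _ _ one_ne_zero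

lemma continuous_phi : Continuous phi := by
  unfold phi
  fun_prop

lemma integrable_phi : Integrable phi := by
  rw [phi_eq_gaussianPDFReal]
  exact integrable_gaussianPDFReal _ _

lemma integral_phi : ∫ x, phi x = 1 := by
  rw [phi_eq_gaussianPDFReal]
  exact integral_gaussianPDFReal_eq_one _ one_ne_zero

lemma hasDerivAt_phi (x : ℝ) : HasDerivAt phi (-x * phi x) x := by
  have h : HasDerivAt (fun y : ℝ => -y ^ 2 / 2) (-x) x :=
    ((hasDerivAt_pow 2 x).neg.div_const 2).congr_deriv (by norm_num; ring)
  exact (h.exp.const_mul _).congr_deriv (by unfold phi; ring)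

lemma tendsto_phi_atTop : Tendsto phi atTop (𝓝 0) := by
  have h : Tendsto (fun x : ℝ => -x ^ 2 / 2) atTop atBot :=
    (tendsto_neg_atBot_iff.2 (tendsto_pow_atTop two_ne_zero)).atBot_div_const two_pos
  have h' := (Real.tendsto_exp_atBot.comp h).const_mul (Real.sqrt (2 * Real.pi))⁻¹
  rwa [mul_zero] at h'

lemma hasDerivAt_setIntegral_Iic {f : ℝ → ℝ} (hf : Integrable f) (hc : Continuous f)
    (x : ℝ) : HasDerivAt (fun x => ∫ s in Iic x, f s) (f x) x := by
  have h : (fun x => ∫ s in Iic x, f s) =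
      fun x => (∫ s in Iic 0, f s) + ∫ s in (0)..x, f s := by
    ext y
    rw [← intervalIntegral.integral_Iic_sub_Iic hf.integrableOn hf.integrableOn]
    ring
  rw [h]
  exact (intervalIntegral.integral_hasDerivAt_right hf.intervalIntegrable
    (hc.stronglyMeasurableAtFilter _ _) hc.continuousAt).const_add _

lemma hasDerivAt_Phi (x : ℝ) : HasDerivAt Phi (phi x) x :=
  hasDerivAt_setIntegral_Iic integrable_phi continuous_phi x

lemma one_sub_Phi_eq_integral_Ioi (x : ℝ) : 1 - Phi x = ∫ s in Ioi x, phi s := by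
  rw [← integral_phi, ← intervalIntegral.integral_Iic_add_Ioi integrable_phi.integrableOn
    integrable_phi.integrableOn, Phi, add_sub_cancel_left]

lemma one_sub_Phi_pos (x : ℝ) : 0 < 1 - Phi x := by
  rw [one_sub_Phi_eq_integral_Ioi, setIntegral_pos_iff_support_of_nonneg_ae
    (ae_of_all _ fun s => (phi_pos s).le) integrable_phi.integrableOn,
    Function.support_eq_univ fun s => (phi_pos s).ne', univ_inter]
  simp

lemma integrableOn_mul_phi (x : ℝ) : IntegrableOn (fun s => s * phi s) (Ioi x) := by
  refine (((integrable_mul_exp_neg_mul_sq one_half_pos).const_mul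
    (Real.sqrt (2 * Real.pi))⁻¹).congr (ae_of_all _ fun s => ?_)).integrableOn
  simp only [phi]
  ring_nf

lemma integral_Ioi_mul_phi (x : ℝ) : ∫ s in Ioi x, s * phi s = phi x := by
  have h := integral_Ioi_of_hasDerivAt_of_tendsto' (f := fun s => -phi s)
    (fun y _ => (hasDerivAt_phi y).neg.congr_deriv (by ring)) (integrableOn_mul_phi x)
    (by simpa using tendsto_phi_atTop.neg)
  simpa using h

lemma mul_one_sub_Phi_le_phi (x : ℝ) : x * (1 - Phi x) ≤ phi x :=
  calc x * (1 - Phi x) = ∫ s in Ioi x, x * phi s := by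
        rw [one_sub_Phi_eq_integral_Ioi, integral_const_mul]
    _ ≤ ∫ s in Ioi x, s * phi s :=
      setIntegral_mono_on (integrable_phi.integrableOn.const_mul x) (integrableOn_mul_phi x)
        measurableSet_Ioi fun s hs => mul_le_mul_of_nonneg_right (le_of_lt hs) (phi_pos s).le
    _ = phi x := integral_Ioi_mul_phi x

lemma hasDerivAt_one_sub_Phi (x : ℝ) : HasDerivAt (fun x => 1 - Phi x) (-phi x) x := by
  simpa using (hasDerivAt_Phi x).const_sub 1

lemma hasDerivAt_Phi_div_one_sub_Phi (x : ℝ) :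
    HasDerivAt (fun x => Phi x / (1 - Phi x)) (phi x / (1 - Phi x) ^ 2) x :=
  ((hasDerivAt_Phi x).div (hasDerivAt_one_sub_Phi x) (one_sub_Phi_pos x).ne').congr_deriv
    (by ring)

lemma hasDerivAt_phi_div_sq_one_sub_Phi (x : ℝ) :
    HasDerivAt (fun x => phi x / (1 - Phi x) ^ 2)
      (phi x * (2 * phi x - x * (1 - Phi x)) / (1 - Phi x) ^ 3) x := by
  have hT := (one_sub_Phi_pos x).ne'
  refine ((hasDerivAt_phi x).div ((hasDerivAt_one_sub_Phi x).pow 2)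
    (pow_ne_zero 2 hT)).congr_deriv ?_
  simp only [Pi.pow_apply]
  field_simp
  ring

/-- the odds function `x ↦ Φ(x)/(1 − Φ(x))` is convex on `ℝ`. -/
theorem stmt_17 : ConvexOn ℝ Set.univ (fun x => Phi x / (1 - Phi x)) := by
  refine convexOn_of_hasDerivWithinAt2_nonneg convex_univ
    (fun x _ => (hasDerivAt_Phi_div_one_sub_Phi x).continuousAt.continuousWithinAt)
    (fun x _ => (hasDerivAt_Phi_div_one_sub_Phi x).hasDerivWithinAt)
    (fun x _ => (hasDerivAt_phi_div_sq_one_sub_Phi x).hasDerivWithinAt) fun x _ => ?_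
  have h_mills := mul_one_sub_Phi_le_phi x
  have h_phi := phi_pos x
  have h_tail := one_sub_Phi_pos x
  exact div_nonneg (mul_nonneg h_phi.le (by linarith)) (by positivity)
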